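/- arXiv:1703.05171 — 2 statements merged into one kernel-verified Lean document; each statement's English description precedes it below -/
import Mathlib

section
/- For every k ≥ 2 and all n, d, w, the semidefinite programming bound A_k(n,d,w) is an upper bound on A(n,d,w): if C ⊆ F_2^n is a constant weight w code with minimum distance at least d, then |C| ≤ A_k(n,d,w). -/
open Finset

/-- The set of words of `F_2^n`. -/
abbrev Word (n : ℕ) := Fin n → ZMod 2

/-- `A n d w` is the maximum size of a binary code of length `n`, constant weight `w`,
and minimum Hamming distance at least `d`. -/
noncomputable def A (n d w : ℕ) : ℕ :=
  sSup {m | ∃ C : Finset (Word n), C.card = m ∧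
    (∀ v ∈ C, hammingNorm v = w) ∧
    ∀ u ∈ C, ∀ v ∈ C, u ≠ v → d ≤ hammingDist u v}

/-- `C_k(D)`: constant weight `w` codes `S ⊇ D` with `|S| ≤ k` and `|D| + 2|S \ D| ≤ k`. -/
abbrev CkD (n k w : ℕ) (D : Finset (Word n)) :=
  {S : Finset (Word n) //
    D ⊆ S ∧ S.card ≤ k ∧ (∀ v ∈ S, hammingNorm v = w) ∧ D.card + 2 * (S \ D).card ≤ k}

/-- The matrix `M_{k,D}(x)` with entries `x(S ∪ S')`. -/
noncomputable def Mmat (n k w : ℕ) (D : Finset (Word n)) (x : Finset (Word n) → ℝ) :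
    Matrix (CkD n k w D) (CkD n k w D) ℝ :=
  fun S S' => x (S.1 ∪ S'.1)

/-- Feasibility for the semidefinite program defining `A_k(n,d,w)`. -/
def FeasibleA (n d w k : ℕ) (x : Finset (Word n) → ℝ) : Prop :=
  x ∅ = 1 ∧
  (∀ S : Finset (Word n), (∃ u ∈ S, ∃ v ∈ S, u ≠ v ∧ hammingDist u v < d) → x S = 0) ∧
  (∀ S : Finset (Word n), ((¬ ∀ v ∈ S, hammingNorm v = w) ∨ k < S.card) → x S = 0) ∧
  (∀ D : Finset (Word n), D.card ≤ k → (∀ v ∈ D, hammingNorm v = w) →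
    (Mmat n k w D x).PosSemidef)

/-- The semidefinite programming bound `A_k(n,d,w)`. -/
noncomputable def Ak (n d w k : ℕ) : ℝ :=
  sSup {r : ℝ | ∃ x : Finset (Word n) → ℝ, FeasibleA n d w k x ∧
    r = ∑ v ∈ univ.filter (fun v : Word n => hammingNorm v = w), x {v}}

lemma union_card_le (n k w : ℕ) (D : Finset (Word n)) (S S' : CkD n k w D) :
    (S.1 ∪ S'.1).card ≤ k := by
  obtain ⟨S, hDS, _, _, hS⟩ := S
  obtain ⟨S', hDS', _, _, hS'⟩ := S'
  have h1 : S ∪ S' = S ∪ (S' \ D) := by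
    ext v; simp only [mem_union, mem_sdiff]
    constructor
    · rintro (h | h)
      · exact Or.inl h
      · by_cases hv : v ∈ D
        · exact Or.inl (hDS hv)
        · exact Or.inr ⟨h, hv⟩
    · rintro (h | ⟨h, _⟩) <;> [exact Or.inl h; exact Or.inr h]
  have h2 : (S ∪ S').card ≤ S.card + (S' \ D).card := h1 ▸ card_union_le _ _
  have h3 : (S \ D).card + D.card = S.card := card_sdiff_add_card_eq_card hDS
  show (S ∪ S').card ≤ k
  omega

lemma indicator_psd (n k w : ℕ) (C : Finset (Word n)) (D : Finset (Word n)) :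
    (Mmat n k w D (fun S => if S ⊆ C ∧ S.card ≤ k then (1:ℝ) else 0)).PosSemidef := by
  set y : CkD n k w D → ℝ := fun S => if S.1 ⊆ C then 1 else 0 with hy
  have hM : ∀ S S' : CkD n k w D,
      Mmat n k w D (fun S => if S ⊆ C ∧ S.card ≤ k then (1:ℝ) else 0) S S' = y S * y S' := by
    intro S S'
    have hc := union_card_le n k w D S S'
    simp only [Mmat, hy]
    by_cases h1 : S.1 ⊆ C <;> by_cases h2 : S'.1 ⊆ C <;>
      simp [h1, h2, union_subset_iff, hc]
  refine Matrix.PosSemidef.of_dotProduct_mulVec_nonneg ?_ ?_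
  · ext i j
    simp only [Matrix.conjTranspose_apply, Mmat, star_trivial, union_comm]
  · intro u
    have key : dotProduct (star u)
        ((Mmat n k w D (fun S => if S ⊆ C ∧ S.card ≤ k then (1:ℝ) else 0)).mulVec u)
        = (∑ S, y S * u S) * (∑ S, y S * u S) := by
      rw [Finset.sum_mul_sum]
      simp only [dotProduct, Matrix.mulVec, hM, star_trivial, Finset.mul_sum]
      exact Finset.sum_congr rfl fun S _ => Finset.sum_congr rfl fun S' _ => by ring
    rw [key]
    exact mul_self_nonneg _

lemma singleton_le_one (n d w k : ℕ) (hk : 2 ≤ k) (x : Finset (Word n) → ℝ)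
    (hx : FeasibleA n d w k x) (v : Word n) (hv : hammingNorm v = w) : x {v} ≤ 1 := by
  have hPSD := hx.2.2.2 ∅ (by simp) (by simp)
  have h1k : 1 ≤ k := le_trans one_le_two hk
  let e : Fin 2 → CkD n k w ∅ :=
    ![⟨∅, by simp⟩, ⟨{v}, by simp [h1k, hk, hv]⟩]
  have h2 := (hPSD.submatrix e).dotProduct_mulVec_nonneg ![-(x {v}), 1]
  simp only [dotProduct, Matrix.mulVec, Matrix.submatrix_apply, Fin.sum_univ_two,
    Mmat, star_trivial, Matrix.cons_val_zero, Matrix.cons_val_one, Matrix.head_cons, e,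
    Finset.union_self, Finset.empty_union, Finset.union_empty, Pi.star_apply] at h2
  rw [hx.1] at h2
  nlinarith [h2]

theorem stmt_6 (n d w k : ℕ) (hk : 2 ≤ k) (C : Finset (Word n))
    (hw : ∀ v ∈ C, hammingNorm v = w)
    (hd : ∀ u ∈ C, ∀ v ∈ C, u ≠ v → d ≤ hammingDist u v) :
    (C.card : ℝ) ≤ Ak n d w k := by
  set F := univ.filter (fun v : Word n => hammingNorm v = w) with hF
  set x : Finset (Word n) → ℝ := fun S => if S ⊆ C ∧ S.card ≤ k then 1 else 0 with hxdef
  have hfeas : FeasibleA n d w k x := by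
    refine ⟨by simp [hxdef], ?_, ?_, fun D _ _ => indicator_psd n k w C D⟩
    · rintro S ⟨u, hu, v, hv, huv, hlt⟩
      have : ¬ S ⊆ C := fun hSC =>
        absurd hlt (not_lt.2 (hd u (hSC hu) v (hSC hv) huv))
      simp [hxdef, this]
    · intro S hS
      rcases hS with h | h
      · have : ¬ S ⊆ C := fun hSC => h fun v hv => hw v (hSC hv)
        simp [hxdef, this]
      · simp [hxdef, not_le.2 h]
  have hobj : ∑ v ∈ F, x {v} = (C.card : ℝ) := by
    have h1k : (1:ℕ) ≤ k := le_trans one_le_two hk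
    have : ∀ v ∈ F, x {v} = if v ∈ C then (1:ℝ) else 0 := by
      intro v _
      simp [hxdef, singleton_subset_iff, h1k]
    rw [Finset.sum_congr rfl this, Finset.sum_ite_mem]
    have hFC : F ∩ C = C := by
      apply Finset.inter_eq_right.2
      intro v hv
      simp [hF, hw v hv]
    simp [hFC]
  have hmem : (C.card : ℝ) ∈ {r : ℝ | ∃ x : Finset (Word n) → ℝ, FeasibleA n d w k x ∧
      r = ∑ v ∈ univ.filter (fun v : Word n => hammingNorm v = w), x {v}} :=
    ⟨x, hfeas, hobj.symm⟩
  have hbdd : BddAbove {r : ℝ | ∃ x : Finset (Word n) → ℝ, FeasibleA n d w k x ∧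
      r = ∑ v ∈ univ.filter (fun v : Word n => hammingNorm v = w), x {v}} := by
    refine ⟨(F.card : ℝ), ?_⟩
    rintro r ⟨y, hy, rfl⟩
    calc ∑ v ∈ F, y {v} ≤ ∑ v ∈ F, (1:ℝ) := by
          refine Finset.sum_le_sum fun v hv => ?_
          exact singleton_le_one n d w k hk y hy v (by simpa [hF] using hv)
      _ = (F.card : ℝ) := by simp
  exact le_csSup hbdd hmem
end

section
/- Let G be a finite group acting unitarily on ℂ^m and let {U_1, ..., U_k} be a representative set for this action, with U_i of size m × m_i. Then a G-invariant matrix A ∈ (ℂ^{m×m})^G is positive semidefinite if and only if each of the matrices U_i^* A U_i (i = 1, ..., k) is positive semidefinite. -/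
open Matrix
open scoped ComplexOrder

/-- The standard inner product on `ℂ^m`. -/
noncomputable def ip {m : ℕ} (x y : Fin m → ℂ) : ℂ := ∑ i, star (x i) * y i

/-!
Write `x = ∑ᵢ ∑ⱼ xᵢⱼ` with `xᵢⱼ ∈ Vᵢⱼ`. Since `ρ` is unitary, composing `A` with the orthogonal
projection onto `Vᵢ'ⱼ'` gives an equivariant map `Vᵢⱼ → Vᵢ'ⱼ'`, which vanishes for `i ≠ i'`; so
`x* A x` splits over the isotypic components. Inside the `i`-th component, write `xᵢⱼ = φⱼ wⱼ` with
`wⱼ ∈ Vᵢⱼ₀` and `φⱼ : Vᵢⱼ₀ → Vᵢⱼ` the given isomorphisms. The invariant forms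
`(v, w) ↦ ⟪φⱼ v, A φⱼ' w⟫` on the irreducible `Vᵢⱼ₀` are multiples `cⱼⱼ' ⟪v, w⟫` of the inner
product (Schur), so evaluating at `u₀ = uᵢⱼ₀` gives `Uᵢ* A Uᵢ = ⟪u₀, u₀⟫ • (cⱼⱼ')`, and the
contribution `∑ cⱼⱼ' ⟪wⱼ, wⱼ'⟫` of the component is nonnegative because `(cⱼⱼ')` is positive
semidefinite.
-/

section InnerProduct

variable {m : ℕ}

lemma ip_eq_dotProduct (x y : Fin m → ℂ) : ip x y = star x ⬝ᵥ y := rfl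

lemma ip_smul_right (x y : Fin m → ℂ) (c : ℂ) : ip x (c • y) = c * ip x y := by
  simp only [ip_eq_dotProduct, dotProduct_smul, smul_eq_mul]

lemma ip_mulVec_left (M : Matrix (Fin m) (Fin m) ℂ) (x y : Fin m → ℂ) :
    ip (M *ᵥ x) y = ip x (Mᴴ *ᵥ y) := by
  rw [ip_eq_dotProduct, ip_eq_dotProduct, star_mulVec, dotProduct_mulVec]

lemma ip_mulVec_mulVec_of_mem_unitaryGroup {U : Matrix (Fin m) (Fin m) ℂ}
    (hU : U ∈ unitaryGroup (Fin m) ℂ) (x y : Fin m → ℂ) : ip (U *ᵥ x) (U *ᵥ y) = ip x y := by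
  rw [ip_mulVec_left, mulVec_mulVec, ← star_eq_conjTranspose, Unitary.star_mul_self_of_mem hU,
    one_mulVec]

lemma ip_apply_mulVec_apply (f f' : (Fin m → ℂ) →ₗ[ℂ] Fin m → ℂ)
    (A : Matrix (Fin m) (Fin m) ℂ) (w v : Fin m → ℂ) :
    ip (f w) (A *ᵥ f' v) =
      ip w (((LinearMap.toMatrix' f)ᴴ * A * LinearMap.toMatrix' f') *ᵥ v) := by
  rw [← LinearMap.toMatrix'_mulVec f, ← LinearMap.toMatrix'_mulVec f', ip_mulVec_left,
    mulVec_mulVec, mulVec_mulVec, mul_assoc]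

lemma ip_sum_mulVec_sum {ι κ : Type*} (s : Finset ι) (t : Finset κ) (f : ι → Fin m → ℂ)
    (A : Matrix (Fin m) (Fin m) ℂ) (g : κ → Fin m → ℂ) :
    ip (∑ i ∈ s, f i) (A *ᵥ ∑ j ∈ t, g j) = ∑ i ∈ s, ∑ j ∈ t, ip (f i) (A *ᵥ g j) := by
  rw [ip_eq_dotProduct, star_sum, mulVec_sum, sum_dotProduct]
  simp only [dotProduct_sum, ip_eq_dotProduct]

lemma eq_of_forall_ip_eq {W : Submodule ℂ (Fin m → ℂ)} {a b : Fin m → ℂ} (ha : a ∈ W)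
    (hb : b ∈ W) (h : ∀ w ∈ W, ip w a = ip w b) : a = b := by
  have hab : ip (a - b) (a - b) = 0 := by
    rw [ip_eq_dotProduct, dotProduct_sub, ← ip_eq_dotProduct, ← ip_eq_dotProduct,
      h _ (W.sub_mem ha hb), sub_self]
  exact sub_eq_zero.mp (dotProduct_star_self_eq_zero.mp hab)

lemma conjTranspose_mul_mul_apply_eq_ip {ι : Type*} (v : ι → Fin m → ℂ)
    (A : Matrix (Fin m) (Fin m) ℂ) (j j' : ι) :
    ((of fun a j => v j a)ᴴ * A * of fun a j => v j a) j j' = ip (v j) (A *ᵥ v j') := by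
  simp only [mul_apply, conjTranspose_apply, of_apply, ip, mulVec, dotProduct, Finset.sum_mul,
    Finset.mul_sum]
  rw [Finset.sum_comm]
  exact Finset.sum_congr rfl fun a _ => Finset.sum_congr rfl fun b _ => by ring

lemma Matrix.PosSemidef.sum_sum_mul_ip_nonneg {ι : Type*} [Fintype ι] {M : Matrix ι ι ℂ}
    (hM : M.PosSemidef) (w : ι → Fin m → ℂ) : 0 ≤ ∑ j, ∑ j', M j j' * ip (w j) (w j') := by
  have hsum : ∑ j, ∑ j', M j j' * ip (w j) (w j') =
      ∑ a, star (fun j => w j a) ⬝ᵥ (M *ᵥ fun j => w j a) := by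
    simp only [ip, dotProduct, mulVec, Finset.mul_sum, Pi.star_apply]
    conv_rhs => rw [Finset.sum_comm]
    refine Finset.sum_congr rfl fun j _ => ?_
    conv_rhs => rw [Finset.sum_comm]
    exact Finset.sum_congr rfl fun j' _ => Finset.sum_congr rfl fun a _ => by ring
  rw [hsum]
  exact Finset.sum_nonneg fun a _ => hM.dotProduct_mulVec_nonneg _

lemma ip_eq_inner (x y : Fin m → ℂ) :
    ip x y = inner ℂ (WithLp.toLp 2 x : EuclideanSpace ℂ (Fin m)) (WithLp.toLp 2 y) := by
  rw [EuclideanSpace.inner_toLp_toLp, dotProduct_comm, ip_eq_dotProduct]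

lemma posSemidef_of_forall_ip_mulVec_nonneg {A : Matrix (Fin m) (Fin m) ℂ}
    (h : ∀ x, 0 ≤ ip x (A *ᵥ x)) : A.PosSemidef := by
  rw [← Matrix.isPositive_toEuclideanLin_iff, LinearMap.isPositive_iff_complex]
  intro x
  obtain ⟨r, hr, hrx⟩ := RCLike.nonneg_iff_exists_ofReal.mp (h x.ofLp)
  have hx : inner ℂ (A.toEuclideanLin x) x = r := by
    rw [← inner_conj_symm, ← WithLp.toLp_ofLp (p := 2) x, Matrix.toLpLin_toLp, ← ip_eq_inner,
      toLin'_apply, ← hrx]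
    exact RCLike.conj_ofReal r
  simp only [hx, RCLike.re_to_complex, Complex.ofReal_re, hr, and_self]

noncomputable def orthProj (W : Submodule ℂ (Fin m → ℂ)) : (Fin m → ℂ) →ₗ[ℂ] Fin m → ℂ :=
  (WithLp.linearEquiv 2 ℂ (Fin m → ℂ)).conj
    (W.comap (WithLp.linearEquiv 2 ℂ (Fin m → ℂ)).toLinearMap).starProjection.toLinearMap

lemma orthProj_apply (W : Submodule ℂ (Fin m → ℂ)) (z : Fin m → ℂ) :
    orthProj W z = ((W.comap (WithLp.linearEquiv 2 ℂ (Fin m → ℂ)).toLinearMap).starProjection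
      (WithLp.toLp 2 z)).ofLp := rfl

lemma orthProj_mem (W : Submodule ℂ (Fin m → ℂ)) (z : Fin m → ℂ) : orthProj W z ∈ W := by
  rw [orthProj_apply]
  exact (W.comap (WithLp.linearEquiv 2 ℂ (Fin m → ℂ)).toLinearMap).starProjection_apply_mem _

lemma ip_orthProj {W : Submodule ℂ (Fin m → ℂ)} {w : Fin m → ℂ} (hw : w ∈ W) (z : Fin m → ℂ) :
    ip w (orthProj W z) = ip w z := by
  set K := W.comap (WithLp.linearEquiv 2 ℂ (Fin m → ℂ)).toLinearMap
  have hwK : (WithLp.toLp 2 w : EuclideanSpace ℂ (Fin m)) ∈ K := hw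
  rw [ip_eq_inner, ip_eq_inner, orthProj_apply, WithLp.toLp_ofLp,
    ← K.inner_starProjection_left_eq_right, K.starProjection_eq_self_iff.mpr hwK]

end InnerProduct

lemma Submodule.exists_sum_eq_of_mem_iSup {R N ι : Type*} [Semiring R] [AddCommMonoid N]
    [Module R N] [Fintype ι] (p : ι → Submodule R N) {x : N} (hx : x ∈ ⨆ i, p i) :
    ∃ y : ∀ i, p i, ∑ i, (y i : N) = x :=
  (mem_iSup_finset_iff_exists_sum p x).mp (by simpa using hx)

theorem exists_eq_smul_on_of_equivariant {G E : Type*} [AddCommGroup E] [Module ℂ E]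
    [FiniteDimensional ℂ E] (ρ : G → Module.End ℂ E) {p : Submodule ℂ E}
    (hp : ∀ g, ∀ v ∈ p, ρ g v ∈ p)
    (hirr : ∀ W ≤ p, (∀ g, ∀ v ∈ W, ρ g v ∈ W) → W = ⊥ ∨ W = p)
    (T : Module.End ℂ E) (hTp : ∀ v ∈ p, T v ∈ p) (hT : ∀ g, ∀ v ∈ p, T (ρ g v) = ρ g (T v)) :
    ∃ c : ℂ, ∀ v ∈ p, T v = c • v := by
  rcases eq_or_ne p ⊥ with rfl | hne
  · exact ⟨0, fun v hv => by simp [(Submodule.mem_bot ℂ).mp hv]⟩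
  have : Nontrivial p := Submodule.nontrivial_iff_ne_bot.mpr hne
  obtain ⟨c, hc⟩ := Module.End.exists_eigenvalue (T.restrict hTp)
  obtain ⟨v, hv⟩ := hc.exists_hasEigenvector
  let K : Submodule ℂ E := p ⊓ LinearMap.ker (T - c • 1)
  have hK : ∀ g, ∀ v ∈ K, ρ g v ∈ K := by
    rintro g v ⟨hvp, hvT⟩
    refine ⟨hp g v hvp, ?_⟩
    simp_all [sub_eq_zero]
  have hvK : (v : E) ∈ K :=
    ⟨v.2, by simpa [sub_eq_zero] using congrArg Subtype.val hv.apply_eq_smul⟩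
  rcases hirr K inf_le_left hK with hK0 | hKp
  · exact absurd (Subtype.ext ((Submodule.mem_bot ℂ).mp (hK0 ▸ hvK))) hv.2
  · exact ⟨c, fun w hw => by simpa [K, sub_eq_zero] using (hKp ▸ hw : w ∈ K).2⟩

section Representation

variable {G : Type*} [Group G] {m : ℕ} (ρ : G →* Matrix (Fin m) (Fin m) ℂ)

lemma orthProj_mulVec_equivariant (hρ : ∀ g, ρ g ∈ unitaryGroup (Fin m) ℂ)
    {W p : Submodule ℂ (Fin m → ℂ)} (hW : ∀ g, ∀ w ∈ W, ρ g *ᵥ w ∈ W)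
    (C : Matrix (Fin m) (Fin m) ℂ)
    (hC : ∀ g, ∀ w ∈ W, ∀ v ∈ p, ip (ρ g *ᵥ w) (C *ᵥ (ρ g *ᵥ v)) = ip w (C *ᵥ v))
    (g : G) {v : Fin m → ℂ} (hv : v ∈ p) :
    orthProj W (C *ᵥ (ρ g *ᵥ v)) = ρ g *ᵥ orthProj W (C *ᵥ v) := by
  refine eq_of_forall_ip_eq (orthProj_mem W _) (hW g _ (orthProj_mem W _)) fun w hw => ?_
  have hw' : ρ g *ᵥ (ρ g⁻¹ *ᵥ w) = w := by
    rw [mulVec_mulVec, ← map_mul, mul_inv_cancel, map_one, one_mulVec]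
  calc ip w (orthProj W (C *ᵥ (ρ g *ᵥ v)))
      = ip (ρ g *ᵥ (ρ g⁻¹ *ᵥ w)) (C *ᵥ (ρ g *ᵥ v)) := by rw [ip_orthProj hw, hw']
    _ = ip (ρ g⁻¹ *ᵥ w) (orthProj W (C *ᵥ v)) := by
      rw [hC g _ (hW _ _ hw) _ hv, ip_orthProj (hW _ _ hw)]
    _ = ip w (ρ g *ᵥ orthProj W (C *ᵥ v)) := by
      rw [← ip_mulVec_mulVec_of_mem_unitaryGroup (hρ g), hw']

theorem exists_ip_mulVec_eq_mul_ip (hρ : ∀ g, ρ g ∈ unitaryGroup (Fin m) ℂ)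
    {p : Submodule ℂ (Fin m → ℂ)} (hp : ∀ g, ∀ v ∈ p, ρ g *ᵥ v ∈ p)
    (hirr : ∀ W ≤ p, (∀ g, ∀ v ∈ W, ρ g *ᵥ v ∈ W) → W = ⊥ ∨ W = p)
    (C : Matrix (Fin m) (Fin m) ℂ)
    (hC : ∀ g, ∀ w ∈ p, ∀ v ∈ p, ip (ρ g *ᵥ w) (C *ᵥ (ρ g *ᵥ v)) = ip w (C *ᵥ v)) :
    ∃ c : ℂ, ∀ w ∈ p, ∀ v ∈ p, ip w (C *ᵥ v) = c * ip w v := by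
  obtain ⟨c, hc⟩ := exists_eq_smul_on_of_equivariant (fun g => (ρ g).mulVecLin) hp hirr
    (orthProj p ∘ₗ C.mulVecLin) (fun v _ => orthProj_mem p _)
    (fun g v hv => orthProj_mulVec_equivariant ρ hρ hp C hC g hv)
  refine ⟨c, fun w hw v hv => ?_⟩
  rw [← ip_orthProj hw]
  exact (congrArg (ip w) (hc v hv)).trans (ip_smul_right w v c)

lemma ip_mulVec_mulVec_mulVec_of_commute (hρ : ∀ g, ρ g ∈ unitaryGroup (Fin m) ℂ)
    {A : Matrix (Fin m) (Fin m) ℂ} (hA : ∀ g, ρ g * A = A * ρ g) (g : G) (x y : Fin m → ℂ) :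
    ip (ρ g *ᵥ x) (A *ᵥ (ρ g *ᵥ y)) = ip x (A *ᵥ y) := by
  rw [mulVec_mulVec, ← hA, ← mulVec_mulVec, ip_mulVec_mulVec_of_mem_unitaryGroup (hρ g)]

theorem ip_mulVec_eq_zero_of_forall_equivariant_eq_zero
    (hρ : ∀ g, ρ g ∈ unitaryGroup (Fin m) ℂ) {W p : Submodule ℂ (Fin m → ℂ)}
    (hW : ∀ g, ∀ w ∈ W, ρ g *ᵥ w ∈ W) {A : Matrix (Fin m) (Fin m) ℂ}
    (hA : ∀ g, ρ g * A = A * ρ g)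
    (hpW : ∀ φ : (Fin m → ℂ) →ₗ[ℂ] Fin m → ℂ, (∀ g, ∀ v ∈ p, φ (ρ g *ᵥ v) = ρ g *ᵥ φ v) →
      (∀ v ∈ p, φ v ∈ W) → ∀ v ∈ p, φ v = 0)
    {w v : Fin m → ℂ} (hw : w ∈ W) (hv : v ∈ p) : ip w (A *ᵥ v) = 0 := by
  have hφ := hpW (orthProj W ∘ₗ A.mulVecLin)
    (fun g v hv => orthProj_mulVec_equivariant ρ hρ hW A
      (fun g w _ v _ => ip_mulVec_mulVec_mulVec_of_commute ρ hρ hA g w v) g hv)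
    (fun v _ => orthProj_mem W _) v hv
  rw [← ip_orthProj hw]
  simp only [LinearMap.comp_apply, mulVecLin_apply] at hφ
  rw [hφ, ip_eq_dotProduct, dotProduct_zero]

theorem ip_sum_mulVec_sum_nonneg (hρ : ∀ g, ρ g ∈ unitaryGroup (Fin m) ℂ)
    {p : Submodule ℂ (Fin m → ℂ)} (hp : ∀ g, ∀ v ∈ p, ρ g *ᵥ v ∈ p)
    (hirr : ∀ W ≤ p, (∀ g, ∀ v ∈ W, ρ g *ᵥ v ∈ W) → W = ⊥ ∨ W = p)
    {u₀ : Fin m → ℂ} (hu₀ : u₀ ∈ p) (hu₀' : u₀ ≠ 0) {ι : Type*} [Fintype ι]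
    (φ : ι → (Fin m → ℂ) →ₗ[ℂ] Fin m → ℂ)
    (hφ : ∀ j g, ∀ v ∈ p, φ j (ρ g *ᵥ v) = ρ g *ᵥ φ j v)
    {A : Matrix (Fin m) (Fin m) ℂ} (hA : ∀ g, ρ g * A = A * ρ g)
    (hM : ((of fun a j => φ j u₀ a)ᴴ * A * of fun a j => φ j u₀ a).PosSemidef)
    (w : ι → Fin m → ℂ) (hw : ∀ j, w j ∈ p) :
    0 ≤ ip (∑ j, φ j (w j)) (A *ᵥ ∑ j, φ j (w j)) := by
  have hform : ∀ j j', ∃ c : ℂ, ∀ x ∈ p, ∀ y ∈ p, ip (φ j x) (A *ᵥ φ j' y) = c * ip x y := by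
    intro j j'
    simp only [ip_apply_mulVec_apply]
    refine exists_ip_mulVec_eq_mul_ip ρ hρ hp hirr _ fun g x hx y hy => ?_
    rw [← ip_apply_mulVec_apply, ← ip_apply_mulVec_apply, hφ j g x hx, hφ j' g y hy,
      ip_mulVec_mulVec_mulVec_of_commute ρ hρ hA]
  choose c hc using hform
  have hr : 0 < ip u₀ u₀ := dotProduct_star_self_pos_iff.mpr hu₀'
  have hMc : ∀ j j', ((of fun a j => φ j u₀ a)ᴴ * A * of fun a j => φ j u₀ a) j j' =
      ip u₀ u₀ * c j j' := by
    intro j j'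
    rw [conjTranspose_mul_mul_apply_eq_ip, hc j j' _ hu₀ _ hu₀, mul_comm]
  have hsum : ip (∑ j, φ j (w j)) (A *ᵥ ∑ j, φ j (w j)) =
      ∑ j, ∑ j', c j j' * ip (w j) (w j') := by
    rw [ip_sum_mulVec_sum]
    exact Finset.sum_congr rfl fun j _ => Finset.sum_congr rfl fun j' _ =>
      hc j j' _ (hw j) _ (hw j')
  have hgram := hM.sum_sum_mul_ip_nonneg w
  simp only [hMc, mul_assoc, ← Finset.mul_sum, ← hsum] at hgram
  simpa only [inv_mul_cancel_left₀ hr.ne'] using mul_nonneg (inv_pos.mpr hr).le hgram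

end Representation

theorem stmt_11_general {G : Type*} [Group G] {m : ℕ}
    -- a unitary representation of `G` on `ℂ^m`
    (ρ : G →* Matrix (Fin m) (Fin m) ℂ)
    (hunitary : ∀ g : G, ρ g ∈ Matrix.unitaryGroup (Fin m) ℂ)
    -- the isotypical decomposition: `V i` is the direct sum of the `m_i = mdims i`
    -- irreducible mutually isomorphic pairwise orthogonal modules `V i j`
    (k : ℕ) (mdims : Fin k → ℕ)
    (V : (i : Fin k) → Fin (mdims i) → Submodule ℂ (Fin m → ℂ))
    -- each `V i j` is `G`-invariant
    (hGinv : ∀ (g : G) (i : Fin k) (j : Fin (mdims i)), ∀ v ∈ V i j, (ρ g).mulVec v ∈ V i j)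
    -- the `V i j` together span `ℂ^m`
    (hspan : (⨆ (i : Fin k), ⨆ (j : Fin (mdims i)), V i j) = ⊤)
    -- each `V i j` is a nonzero irreducible `G`-module
    (hirred : ∀ (i : Fin k) (j : Fin (mdims i)), V i j ≠ ⊥ ∧
      ∀ W : Submodule ℂ (Fin m → ℂ), W ≤ V i j →
        (∀ g : G, ∀ v ∈ W, (ρ g).mulVec v ∈ W) → W = ⊥ ∨ W = V i j)
    -- representative vectors `u i j ∈ V i j`, nonzero
    (u : (i : Fin k) → Fin (mdims i) → (Fin m → ℂ))
    (hu : ∀ (i : Fin k) (j : Fin (mdims i)), u i j ∈ V i j ∧ u i j ≠ 0)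
    -- for each `i` and all `j, j'` there is a `G`-isomorphism `V i j → V i j'`
    -- mapping `u i j` to `u i j'`
    (hiso : ∀ (i : Fin k) (j j' : Fin (mdims i)),
      ∃ φ : (Fin m → ℂ) →ₗ[ℂ] (Fin m → ℂ),
        (∀ g : G, ∀ v ∈ V i j, φ ((ρ g).mulVec v) = (ρ g).mulVec (φ v)) ∧
        Submodule.map φ (V i j) = V i j' ∧
        (∀ v ∈ V i j, φ v = 0 → v = 0) ∧
        φ (u i j) = u i j')
    -- `V i j` and `V i' j'` are non-isomorphic for `i ≠ i'`: every `G`-equivariant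
    -- map between them vanishes
    (hnoniso : ∀ (i i' : Fin k), i ≠ i' → ∀ (j : Fin (mdims i)) (j' : Fin (mdims i'))
      (φ : (Fin m → ℂ) →ₗ[ℂ] (Fin m → ℂ)),
        (∀ g : G, ∀ v ∈ V i j, φ ((ρ g).mulVec v) = (ρ g).mulVec (φ v)) →
        (∀ v ∈ V i j, φ v ∈ V i' j') → ∀ v ∈ V i j, φ v = 0)
    -- a `G`-invariant matrix `A`
    (A : Matrix (Fin m) (Fin m) ℂ)
    (hA : ∀ g : G, ρ g * A = A * ρ g) :
    -- `A` is positive semidefinite iff each block `U_i^* A U_i` is,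
    -- where `U_i` has columns `u i j`
    A.PosSemidef ↔ ∀ i : Fin k,
      (((Matrix.of fun (a : Fin m) (j : Fin (mdims i)) => u i j a)ᴴ * A *
        Matrix.of fun (a : Fin m) (j : Fin (mdims i)) => u i j a)).PosSemidef := by
  refine ⟨fun hA' i => hA'.conjTranspose_mul_mul_same _, fun hM => ?_⟩
  refine posSemidef_of_forall_ip_mulVec_nonneg fun x => ?_
  obtain ⟨y, rfl⟩ := Submodule.exists_sum_eq_of_mem_iSup _ (hspan ▸ Submodule.mem_top (x := x))
  choose z hz using fun i => Submodule.exists_sum_eq_of_mem_iSup _ (y i).2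
  have hcross : ∀ i i', i ≠ i' → ip (y i : Fin m → ℂ) (A *ᵥ y i') = 0 := by
    intro i i' hii'
    rw [← hz i, ← hz i', ip_sum_mulVec_sum]
    exact Finset.sum_eq_zero fun j _ => Finset.sum_eq_zero fun j' _ =>
      ip_mulVec_eq_zero_of_forall_equivariant_eq_zero ρ hunitary (hGinv · i j) hA
        (hnoniso i' i hii'.symm j' j) (z i j).2 (z i' j').2
  have hdiag : ∀ i, 0 ≤ ip (y i : Fin m → ℂ) (A *ᵥ y i) := by
    intro i
    rcases isEmpty_or_nonempty (Fin (mdims i)) with hempty | ⟨⟨j₀⟩⟩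
    · simp [← hz i, ip_eq_dotProduct]
    choose φ hφ hφV _ hφu using hiso i j₀
    choose w hw hφw using fun j => Submodule.mem_map.mp ((hφV j).ge (z i j).2)
    rw [← hz i]
    simp only [← hφw]
    refine ip_sum_mulVec_sum_nonneg ρ hunitary (hGinv · i j₀) (hirred i j₀).2 (hu i j₀).1
      (hu i j₀).2 φ hφ hA ?_ w hw
    simpa only [hφu] using hM i
  rw [ip_sum_mulVec_sum]
  refine Finset.sum_nonneg fun i _ => ?_
  rw [Finset.sum_eq_single i (fun i' _ hi' => hcross i i' hi'.symm) (by simp)]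
  exact hdiag i

theorem stmt_11 {G : Type*} [Group G] [Fintype G] {m : ℕ}
    -- a unitary representation of `G` on `ℂ^m`
    (ρ : G →* Matrix (Fin m) (Fin m) ℂ)
    (hunitary : ∀ g : G, ρ g ∈ Matrix.unitaryGroup (Fin m) ℂ)
    -- the isotypical decomposition: `V i` is the direct sum of the `m_i = mdims i`
    -- irreducible mutually isomorphic pairwise orthogonal modules `V i j`
    (k : ℕ) (mdims : Fin k → ℕ)
    (V : (i : Fin k) → Fin (mdims i) → Submodule ℂ (Fin m → ℂ))
    -- each `V i j` is `G`-invariant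
    (hGinv : ∀ (g : G) (i : Fin k) (j : Fin (mdims i)), ∀ v ∈ V i j, (ρ g).mulVec v ∈ V i j)
    -- the `V i j` together span `ℂ^m`
    (hspan : (⨆ (i : Fin k), ⨆ (j : Fin (mdims i)), V i j) = ⊤)
    -- the `V i j` are pairwise orthogonal
    (horth : ∀ (i i' : Fin k) (j : Fin (mdims i)) (j' : Fin (mdims i')),
      (⟨i, j⟩ : Σ i : Fin k, Fin (mdims i)) ≠ ⟨i', j'⟩ →
      ∀ v ∈ V i j, ∀ w ∈ V i' j', ip v w = 0)
    -- each `V i j` is a nonzero irreducible `G`-module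
    (hirred : ∀ (i : Fin k) (j : Fin (mdims i)), V i j ≠ ⊥ ∧
      ∀ W : Submodule ℂ (Fin m → ℂ), W ≤ V i j →
        (∀ g : G, ∀ v ∈ W, (ρ g).mulVec v ∈ W) → W = ⊥ ∨ W = V i j)
    -- representative vectors `u i j ∈ V i j`, nonzero
    (u : (i : Fin k) → Fin (mdims i) → (Fin m → ℂ))
    (hu : ∀ (i : Fin k) (j : Fin (mdims i)), u i j ∈ V i j ∧ u i j ≠ 0)
    -- for each `i` and all `j, j'` there is a `G`-isomorphism `V i j → V i j'`
    -- mapping `u i j` to `u i j'`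
    (hiso : ∀ (i : Fin k) (j j' : Fin (mdims i)),
      ∃ φ : (Fin m → ℂ) →ₗ[ℂ] (Fin m → ℂ),
        (∀ g : G, ∀ v ∈ V i j, φ ((ρ g).mulVec v) = (ρ g).mulVec (φ v)) ∧
        Submodule.map φ (V i j) = V i j' ∧
        (∀ v ∈ V i j, φ v = 0 → v = 0) ∧
        φ (u i j) = u i j')
    -- `V i j` and `V i' j'` are non-isomorphic for `i ≠ i'`: every `G`-equivariant
    -- map between them vanishes
    (hnoniso : ∀ (i i' : Fin k), i ≠ i' → ∀ (j : Fin (mdims i)) (j' : Fin (mdims i'))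
      (φ : (Fin m → ℂ) →ₗ[ℂ] (Fin m → ℂ)),
        (∀ g : G, ∀ v ∈ V i j, φ ((ρ g).mulVec v) = (ρ g).mulVec (φ v)) →
        (∀ v ∈ V i j, φ v ∈ V i' j') → ∀ v ∈ V i j, φ v = 0)
    -- a `G`-invariant matrix `A`
    (A : Matrix (Fin m) (Fin m) ℂ)
    (hA : ∀ g : G, ρ g * A = A * ρ g) :
    -- `A` is positive semidefinite iff each block `U_i^* A U_i` is,
    -- where `U_i` has columns `u i j`
    A.PosSemidef ↔ ∀ i : Fin k,
      (((Matrix.of fun (a : Fin m) (j : Fin (mdims i)) => u i j a)ᴴ * A *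
        Matrix.of fun (a : Fin m) (j : Fin (mdims i)) => u i j a)).PosSemidef :=
  stmt_11_general ρ hunitary k mdims V hGinv hspan hirred u hu hiso hnoniso A hA
end
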